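/- Let n and ℓ be positive integers, and let π_ℂ : ℂ^{n×ℓ} → ℂ^{n×ℓ} (respectively π : ℝ^{n×ℓ} → ℝ^{n×ℓ}) denote column-centering: π_ℂ([a₁ … a_ℓ]) = [a₁−ā, …, a_ℓ−ā] with ā = (a₁+⋯+a_ℓ)/ℓ. Then for all A, B ∈ ℂ^{n×ℓ}: d_{F(n)}(A,B) = d_{U(n)}(π_ℂ(A), π_ℂ(B)), and for all A, B ∈ ℝ^{n×ℓ}: d_{E(n)}(A,B) = d_{O(n)}(π(A), π(B)). -/

import Mathlib

open Matrix
open scoped ComplexOrder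

/-- Frobenius norm of a real matrix: `‖A‖ = √(trace (A Aᵀ))`. -/
noncomputable def frobR {n l : ℕ} (A : Matrix (Fin n) (Fin l) ℝ) : ℝ :=
  Real.sqrt (Matrix.trace (A * Aᵀ))

/-- Frobenius norm of a complex matrix: `‖A‖ = √(trace (A Aᴴ))`. -/
noncomputable def frobC {n l : ℕ} (A : Matrix (Fin n) (Fin l) ℂ) : ℝ :=
  Real.sqrt (Matrix.trace (A * Aᴴ)).re

open Classical in
/-- The unique positive semidefinite square root of a positive semidefinite real
symmetric matrix (junk value `0` if `M` is not positive semidefinite). -/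
noncomputable def matSqrtR {k : ℕ} (M : Matrix (Fin k) (Fin k) ℝ) : Matrix (Fin k) (Fin k) ℝ :=
  if h : M.PosSemidef then
    (h.1.eigenvectorUnitary : Matrix (Fin k) (Fin k) ℝ) *
      diagonal ((↑) ∘ Real.sqrt ∘ h.1.eigenvalues) *
      (star h.1.eigenvectorUnitary : Matrix (Fin k) (Fin k) ℝ)
  else 0

open Classical in
/-- The unique positive semidefinite square root of a positive semidefinite hermitian
matrix (junk value `0` if `M` is not positive semidefinite). -/
noncomputable def matSqrtC {k : ℕ} (M : Matrix (Fin k) (Fin k) ℂ) : Matrix (Fin k) (Fin k) ℂ :=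
  if h : M.PosSemidef then
    (h.1.eigenvectorUnitary : Matrix (Fin k) (Fin k) ℂ) *
      diagonal ((↑) ∘ Real.sqrt ∘ h.1.eigenvalues) *
      (star h.1.eigenvectorUnitary : Matrix (Fin k) (Fin k) ℂ)
  else 0

/-- Orbit distance for the orthogonal group `O(n)` acting by left multiplication. -/
noncomputable def dO {n l : ℕ} (A B : Matrix (Fin n) (Fin l) ℝ) : ℝ :=
  sInf {x | ∃ W ∈ Matrix.orthogonalGroup (Fin n) ℝ, x = frobR (W * A - B)}

/-- Orbit distance for the unitary group `U(n)` acting by left multiplication. -/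
noncomputable def dU {n l : ℕ} (A B : Matrix (Fin n) (Fin l) ℂ) : ℝ :=
  sInf {x | ∃ W ∈ Matrix.unitaryGroup (Fin n) ℂ, x = frobC (W * A - B)}

/-- `q𝟙ᵀ` : the `n × l` matrix each of whose columns equals `q` (real case). -/
def colMatR {n l : ℕ} (q : Fin n → ℝ) : Matrix (Fin n) (Fin l) ℝ :=
  Matrix.of fun i _ => q i

/-- `q𝟙ᵀ` : the `n × l` matrix each of whose columns equals `q` (complex case). -/
def colMatC {n l : ℕ} (q : Fin n → ℂ) : Matrix (Fin n) (Fin l) ℂ :=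
  Matrix.of fun i _ => q i

/-- Orbit distance for the euclidean group `E(n) = O(n) ⋉ ℝⁿ` acting columnwise. -/
noncomputable def dE {n l : ℕ} (A B : Matrix (Fin n) (Fin l) ℝ) : ℝ :=
  sInf {x | ∃ P ∈ Matrix.orthogonalGroup (Fin n) ℝ, ∃ q : Fin n → ℝ,
    x = frobR (P * A + colMatR q - B)}

/-- Orbit distance for the complex euclidean group `F(n) = U(n) ⋉ ℂⁿ` acting columnwise. -/
noncomputable def dF {n l : ℕ} (A B : Matrix (Fin n) (Fin l) ℂ) : ℝ :=
  sInf {x | ∃ P ∈ Matrix.unitaryGroup (Fin n) ℂ, ∃ q : Fin n → ℂ,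
    x = frobC (P * A + colMatC q - B)}

/-- Column-centering `π` : subtract from each column the average of all columns (real case). -/
noncomputable def centerR {n l : ℕ} (A : Matrix (Fin n) (Fin l) ℝ) : Matrix (Fin n) (Fin l) ℝ :=
  Matrix.of fun i j => A i j - (∑ k, A i k) / (l : ℝ)

/-- Column-centering `π_ℂ` : subtract from each column the average of all columns (complex case). -/
noncomputable def centerC {n l : ℕ} (A : Matrix (Fin n) (Fin l) ℂ) : Matrix (Fin n) (Fin l) ℂ :=
  Matrix.of fun i j => A i j - (∑ k, A i k) / (l : ℂ)


/-!
Column-centering `π` is the orthogonal projection of every row onto the complement of `𝟙`. Hence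
it annihilates the translation part `q𝟙ᵀ`, commutes with left multiplication, and does not
increase the Frobenius norm, so `‖PA + q𝟙ᵀ - B‖ ≥ ‖π(PA + q𝟙ᵀ - B)‖ = ‖P π(A) - π(B)‖`.
Conversely `W π(A) - π(B) = π(WA - B)` is itself a translate `WA + q𝟙ᵀ - B`, with `q` minus the
average column of `WA - B`. So every value of the `F(n)`-objective dominates one of the
`U(n)`-objective, and every value of the latter is one of the former.
-/

namespace Matrix

section Field

variable {𝕜 : Type*} [Field 𝕜] {m m' ι : Type*} [Fintype ι]

def rowMean (A : Matrix m ι 𝕜) : m → 𝕜 :=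
  A *ᵥ fun _ => (Fintype.card ι : 𝕜)⁻¹

def centerColumns (A : Matrix m ι 𝕜) : Matrix m ι 𝕜 :=
  A - replicateCol ι (rowMean A)

omit [Fintype ι] in
theorem replicateCol_sub (v w : m → 𝕜) :
    replicateCol ι (v - w) = replicateCol ι v - replicateCol ι w :=
  rfl

theorem rowMean_add (A B : Matrix m ι 𝕜) : rowMean (A + B) = rowMean A + rowMean B :=
  add_mulVec A B _

theorem rowMean_sub (A B : Matrix m ι 𝕜) : rowMean (A - B) = rowMean A - rowMean B :=
  sub_mulVec A B _

theorem rowMean_mul [Fintype m] (P : Matrix m' m 𝕜) (A : Matrix m ι 𝕜) :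
    rowMean (P * A) = P *ᵥ rowMean A :=
  (mulVec_mulVec _ P A).symm

theorem rowMean_replicateCol [CharZero 𝕜] [Nonempty ι] (q : m → 𝕜) :
    rowMean (replicateCol ι q) = q := by
  have : (Fintype.card ι : 𝕜) ≠ 0 := Nat.cast_ne_zero.mpr Fintype.card_ne_zero
  ext i
  simp only [rowMean, mulVec, dotProduct, replicateCol_apply, Finset.sum_const, Finset.card_univ,
    nsmul_eq_mul]
  field_simp

theorem centerColumns_mul_add_replicateCol_sub [CharZero 𝕜] [Fintype m] [Nonempty ι]
    (P : Matrix m' m 𝕜) (A : Matrix m ι 𝕜) (q : m' → 𝕜) (B : Matrix m' ι 𝕜) :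
    centerColumns (P * A + replicateCol ι q - B) = P * centerColumns A - centerColumns B := by
  simp only [centerColumns, rowMean_sub, rowMean_add, rowMean_mul, rowMean_replicateCol,
    replicateCol_sub, replicateCol_add, replicateCol_mulVec, Matrix.mul_sub]
  abel

theorem mul_centerColumns_sub_centerColumns [Fintype m] (P : Matrix m' m 𝕜) (A : Matrix m ι 𝕜)
    (B : Matrix m' ι 𝕜) :
    P * centerColumns A - centerColumns B =
      P * A + replicateCol ι (-rowMean (P * A - B)) - B := by
  simp only [centerColumns, rowMean_sub, rowMean_mul, neg_sub, replicateCol_sub,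
    replicateCol_mulVec, Matrix.mul_sub]
  abel

end Field

section Frobenius

attribute [local instance] frobeniusNormedAddCommGroup

variable {𝕜 : Type*} [RCLike 𝕜] {m ι : Type*} [Fintype m] [Fintype ι]

theorem frobenius_norm_sq {α : Type*} [NormedAddCommGroup α] (A : Matrix m ι α) :
    ‖A‖ ^ 2 = ∑ i, ∑ j, ‖A i j‖ ^ 2 := by
  rw [frobenius_norm_def, ← Real.sqrt_eq_rpow, Real.sq_sqrt (by positivity)]
  simp only [Real.rpow_two]

omit [Fintype m] in
theorem sum_norm_sub_mean_sq_le (f : ι → 𝕜) :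
    ∑ j, ‖f j - ∑ k, f k * (Fintype.card ι : 𝕜)⁻¹‖ ^ 2 ≤ ∑ j, ‖f j‖ ^ 2 := by
  set c := ∑ k, f k * (Fintype.card ι : 𝕜)⁻¹ with hc
  have hsum : ∑ k, f k = (Fintype.card ι : 𝕜) * c := by
    rcases isEmpty_or_nonempty ι with hι | hι
    · simp
    · have : (Fintype.card ι : 𝕜) ≠ 0 := Nat.cast_ne_zero.mpr Fintype.card_ne_zero
      rw [hc, ← Finset.sum_mul]
      field_simp
  have hinner : RCLike.re (inner 𝕜 (∑ k, f k) c) = Fintype.card ι * ‖c‖ ^ 2 := by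
    rw [hsum, ← smul_eq_mul, inner_smul_left]
    simp [inner_self_eq_norm_sq_to_K]
  calc ∑ j, ‖f j - c‖ ^ 2
        = ∑ j, (‖f j‖ ^ 2 - 2 * RCLike.re (inner 𝕜 (f j) c) + ‖c‖ ^ 2) := by
        simp only [norm_sub_sq (𝕜 := 𝕜)]
    _ = ∑ j, ‖f j‖ ^ 2 - Fintype.card ι * ‖c‖ ^ 2 := by
        rw [Finset.sum_add_distrib, Finset.sum_sub_distrib, ← Finset.mul_sum, ← map_sum,
          ← sum_inner, hinner]
        simp only [Finset.sum_const, Finset.card_univ, nsmul_eq_mul]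
        ring
    _ ≤ ∑ j, ‖f j‖ ^ 2 := by
        have : 0 ≤ (Fintype.card ι : ℝ) * ‖c‖ ^ 2 := by positivity
        linarith

theorem norm_centerColumns_le (A : Matrix m ι 𝕜) : ‖centerColumns A‖ ≤ ‖A‖ := by
  rw [← sq_le_sq₀ (norm_nonneg _) (norm_nonneg _), frobenius_norm_sq, frobenius_norm_sq]
  exact Finset.sum_le_sum fun i _ => sum_norm_sub_mean_sq_le (A i)

theorem re_trace_mul_conjTranspose (A : Matrix m ι 𝕜) :
    RCLike.re (A * Aᴴ).trace = ‖A‖ ^ 2 := by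
  simp [frobenius_norm_sq, trace, mul_apply, RCLike.mul_conj]

theorem sInf_norm_mul_add_replicateCol_sub [Nonempty ι] {G : Set (Matrix m m 𝕜)}
    (hG : G.Nonempty) (A B : Matrix m ι 𝕜) :
    sInf {x | ∃ P ∈ G, ∃ q : m → 𝕜, x = ‖P * A + replicateCol ι q - B‖} =
      sInf {x | ∃ W ∈ G, x = ‖W * centerColumns A - centerColumns B‖} := by
  obtain ⟨P₀, hP₀⟩ := hG
  have hbdd : ∀ S : Set ℝ, (∀ x ∈ S, 0 ≤ x) → BddBelow S := fun S hS => ⟨0, hS⟩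
  apply le_antisymm
  · refine csInf_le_csInf (hbdd _ ?_) ⟨_, P₀, hP₀, rfl⟩ ?_
    · rintro _ ⟨P, -, q, rfl⟩
      exact norm_nonneg _
    · rintro _ ⟨W, hW, rfl⟩
      exact ⟨W, hW, _, by rw [mul_centerColumns_sub_centerColumns]⟩
  · refine le_csInf ⟨_, P₀, hP₀, 0, rfl⟩ ?_
    rintro _ ⟨P, hP, q, rfl⟩
    calc sInf {x | ∃ W ∈ G, x = ‖W * centerColumns A - centerColumns B‖}
        ≤ ‖P * centerColumns A - centerColumns B‖ := by
          refine csInf_le (hbdd _ ?_) ⟨P, hP, rfl⟩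
          rintro _ ⟨W, -, rfl⟩
          exact norm_nonneg _
      _ = ‖centerColumns (P * A + replicateCol ι q - B)‖ := by
          rw [centerColumns_mul_add_replicateCol_sub]
      _ ≤ ‖P * A + replicateCol ι q - B‖ := norm_centerColumns_le _

end Frobenius

end Matrix

section Frobenius

attribute [local instance] frobeniusNormedAddCommGroup

theorem frobC_eq_norm {n l : ℕ} (A : Matrix (Fin n) (Fin l) ℂ) : frobC A = ‖A‖ := by
  rw [frobC, ← RCLike.re_to_complex, re_trace_mul_conjTranspose, Real.sqrt_sq (norm_nonneg _)]

theorem frobR_eq_norm {n l : ℕ} (A : Matrix (Fin n) (Fin l) ℝ) : frobR A = ‖A‖ := by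
  rw [frobR, ← conjTranspose_eq_transpose_of_trivial, ← Real.sqrt_sq (norm_nonneg A),
    ← re_trace_mul_conjTranspose, RCLike.re_to_real]

end Frobenius

theorem centerC_eq_centerColumns {n l : ℕ} (A : Matrix (Fin n) (Fin l) ℂ) :
    centerC A = centerColumns A := by
  ext i j
  simp [centerC, centerColumns, rowMean, mulVec, dotProduct, replicateCol_apply, Finset.sum_mul,
    div_eq_mul_inv]

theorem centerR_eq_centerColumns {n l : ℕ} (A : Matrix (Fin n) (Fin l) ℝ) :
    centerR A = centerColumns A := by
  ext i j
  simp [centerR, centerColumns, rowMean, mulVec, dotProduct, replicateCol_apply, Finset.sum_mul,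
    div_eq_mul_inv]

theorem stmt14_general (n l : ℕ) (hl : 0 < l) :
    (∀ A B : Matrix (Fin n) (Fin l) ℂ, dF A B = dU (centerC A) (centerC B)) ∧
      (∀ A B : Matrix (Fin n) (Fin l) ℝ, dE A B = dO (centerR A) (centerR B)) := by
  have : Nonempty (Fin l) := Fin.pos_iff_nonempty.mp hl
  constructor
  · intro A B
    simp only [dF, dU, frobC_eq_norm, centerC_eq_centerColumns]
    exact sInf_norm_mul_add_replicateCol_sub ⟨1, one_mem _⟩ A B
  · intro A B
    simp only [dE, dO, frobR_eq_norm, centerR_eq_centerColumns]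
    exact sInf_norm_mul_add_replicateCol_sub ⟨1, one_mem _⟩ A B

/-- Lemma 10: `d_{F(n)}(A,B) = d_{U(n)}(π_ℂ(A), π_ℂ(B))` for complex matrices, and
`d_{E(n)}(A,B) = d_{O(n)}(π(A), π(B))` for real matrices. -/
theorem stmt14 (n l : ℕ) (hn : 0 < n) (hl : 0 < l) :
    (∀ A B : Matrix (Fin n) (Fin l) ℂ, dF A B = dU (centerC A) (centerC B)) ∧
      (∀ A B : Matrix (Fin n) (Fin l) ℝ, dE A B = dO (centerR A) (centerR B)) :=
  stmt14_general n l hl
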